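/- (Content of Lemma 3.5) For all real parameters a > 0, b > 1, T > 0, every even integer n ≥ 2, and every χ ∈ [0, s_n(b,T)], one has G_{a,b,T}(χ) ≤ a·T·b^{n−2}. -/

import Mathlib

open Real Filter Set

/-- Breakpoints `s_n(b,T) = T·π·(b^n − 1)/(b − 1)`. -/
noncomputable def brk (b T : ℝ) (n : ℕ) : ℝ := T * Real.pi * (b ^ n - 1) / (b - 1)

/-- Index of the segment containing `x ≥ 0`: the unique `m` with `s_m ≤ x < s_{m+1}`
(for `b > 1`, `T > 0`). -/
noncomputable def seg (b T x : ℝ) : ℕ := sInf {n : ℕ | x < brk b T (n + 1)}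

/-- The saturated Nussbaum function `N_{a,b,T}`: on `[s_{n−1}, s_n)` (with `m = n − 1`)
it equals `(−1)^m·a·cos((χ − s_m)/(b^m·T))`, extended evenly to `χ < 0`. -/
noncomputable def satN (a b T : ℝ) (χ : ℝ) : ℝ :=
  (-1 : ℝ) ^ (seg b T |χ|) * a *
    Real.cos ((|χ| - brk b T (seg b T |χ|)) / (b ^ (seg b T |χ|) * T))

/-- The integrated function `G_{a,b,T}(χ) = ∫_0^χ N_{a,b,T}(τ) dτ`. -/
noncomputable def satG (a b T : ℝ) (χ : ℝ) : ℝ := ∫ τ in (0:ℝ)..χ, satN a b T τ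

/-! On each segment `[s_m, s_{m+1}]` the function `N` is a half period of a cosine of
amplitude `a` and period `2π b^m T`, with alternating sign, so `G` is zero at every breakpoint
and equals `(−1)^m a b^m T sin((χ − s_m)/(b^m T))` in between. On a segment with `m` even this
is at most `a b^m T`, and for `m < n` with `m`, `n` both even we have `m ≤ n − 2`; on a segment
with `m` odd it is nonpositive. -/

theorem exists_lt_mem_Icc_succ {α : Type*} [LinearOrder α] {f : ℕ → α} {x : α} {n : ℕ}
    (hn : n ≠ 0) (hx : x ∈ Icc (f 0) (f n)) : ∃ m < n, x ∈ Icc (f m) (f (m + 1)) := by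
  classical
  have hex : ∃ k, x ≤ f (k + 1) := ⟨n - 1, by rw [Nat.sub_add_cancel (by omega)]; exact hx.2⟩
  refine ⟨Nat.find hex, ?_, ?_, Nat.find_spec hex⟩
  · have := Nat.find_min' hex (m := n - 1) (by rw [Nat.sub_add_cancel (by omega)]; exact hx.2)
    omega
  · by_cases h0 : Nat.find hex = 0
    · rw [h0]; exact hx.1
    · have hmin := Nat.find_min hex (m := Nat.find hex - 1) (by omega)
      rw [Nat.sub_add_cancel (Nat.pos_of_ne_zero h0)] at hmin
      exact (not_le.1 hmin).le

section Breakpoints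

variable {b T : ℝ}

theorem brk_zero (b T : ℝ) : brk b T 0 = 0 := by simp [brk]

theorem brk_succ_sub (hb : 1 < b) (T : ℝ) (m : ℕ) :
    brk b T (m + 1) - brk b T m = T * π * b ^ m := by
  rw [brk, brk, div_sub_div_same, div_eq_iff (by linarith)]
  ring

theorem brk_succ_sub_div (hb : 1 < b) (hT : 0 < T) (m : ℕ) :
    (brk b T (m + 1) - brk b T m) / (b ^ m * T) = π := by
  have : b ^ m ≠ 0 := by positivity
  rw [brk_succ_sub hb]
  field_simp

theorem brk_lt_succ (hb : 1 < b) (hT : 0 < T) (m : ℕ) : brk b T m < brk b T (m + 1) := by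
  have := brk_succ_sub hb T m
  have : 0 < T * π * b ^ m := by positivity
  linarith

theorem brk_strictMono (hb : 1 < b) (hT : 0 < T) : StrictMono (brk b T) :=
  strictMono_nat_of_lt_succ (brk_lt_succ hb hT)

theorem brk_nonneg (hb : 1 < b) (hT : 0 < T) (m : ℕ) : 0 ≤ brk b T m := by
  simpa [brk_zero] using (brk_strictMono hb hT).monotone (Nat.zero_le m)

theorem seg_eq_of_mem_Ico (hb : 1 < b) (hT : 0 < T) {m : ℕ} {x : ℝ}
    (hx : x ∈ Ico (brk b T m) (brk b T (m + 1))) : seg b T x = m := by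
  have hmem : m ∈ {n : ℕ | x < brk b T (n + 1)} := hx.2
  refine le_antisymm (Nat.sInf_le hmem) (le_csInf ⟨m, hmem⟩ fun k hk => ?_)
  by_contra! hkm
  have : brk b T (k + 1) ≤ brk b T m := (brk_strictMono hb hT).monotone hkm
  exact (lt_of_lt_of_le hk this).not_ge hx.1

end Breakpoints

section Segment

variable {a b T : ℝ}

/-- This also holds at the right endpoint `s_{m+1}`, where `seg` already jumps to `m + 1`:
both cosine pieces take the value `(−1)^(m+1) a` there. -/
theorem satN_eq_of_mem_Icc (hb : 1 < b) (hT : 0 < T) {m : ℕ} {x : ℝ}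
    (hx : x ∈ Icc (brk b T m) (brk b T (m + 1))) :
    satN a b T x = (-1) ^ m * a * cos ((x - brk b T m) / (b ^ m * T)) := by
  rw [satN, abs_of_nonneg ((brk_nonneg hb hT m).trans hx.1)]
  rcases hx.2.lt_or_eq with hlt | rfl
  · rw [seg_eq_of_mem_Ico hb hT ⟨hx.1, hlt⟩]
  · rw [seg_eq_of_mem_Ico hb hT ⟨le_rfl, brk_lt_succ hb hT _⟩, sub_self, zero_div, cos_zero,
      brk_succ_sub_div hb hT, cos_pi, pow_succ]
    ring

theorem hasDerivAt_segment_primitive (a b T : ℝ) (m : ℕ) (hbT : b ^ m * T ≠ 0) (x : ℝ) :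
    HasDerivAt (fun χ => (-1) ^ m * a * (b ^ m * T) * sin ((χ - brk b T m) / (b ^ m * T)))
      ((-1) ^ m * a * cos ((x - brk b T m) / (b ^ m * T))) x := by
  have hinner : HasDerivAt (fun χ => (χ - brk b T m) / (b ^ m * T)) (1 / (b ^ m * T)) x := by
    simpa using ((hasDerivAt_id x).sub_const (brk b T m)).div_const (b ^ m * T)
  refine (((hasDerivAt_sin _).comp x hinner).const_mul ((-1) ^ m * a * (b ^ m * T))).congr_deriv ?_
  calc _ = (-1) ^ m * a * cos ((x - brk b T m) / (b ^ m * T)) * ((b ^ m * T) * (1 / (b ^ m * T))) :=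
        by ring
    _ = _ := by rw [mul_one_div_cancel hbT, mul_one]

theorem intervalIntegrable_satN_of_subset_Icc (hb : 1 < b) (hT : 0 < T) {m : ℕ} {x y : ℝ}
    (hxy : uIcc x y ⊆ Icc (brk b T m) (brk b T (m + 1))) :
    IntervalIntegrable (satN a b T) MeasureTheory.volume x y := by
  have hcont : Continuous fun χ => (-1) ^ m * a * cos ((χ - brk b T m) / (b ^ m * T)) := by
    fun_prop
  exact (hcont.continuousOn.congr fun χ hχ => satN_eq_of_mem_Icc hb hT (hxy hχ)).intervalIntegrable

theorem integral_satN_segment (hb : 1 < b) (hT : 0 < T) {m : ℕ} {χ : ℝ}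
    (hχ : χ ∈ Icc (brk b T m) (brk b T (m + 1))) :
    ∫ τ in brk b T m..χ, satN a b T τ =
      (-1) ^ m * a * (b ^ m * T) * sin ((χ - brk b T m) / (b ^ m * T)) := by
  have hsub : Icc (brk b T m) χ ⊆ Icc (brk b T m) (brk b T (m + 1)) :=
    Icc_subset_Icc_right hχ.2
  rw [intervalIntegral.integral_eq_sub_of_hasDerivAt_of_le hχ.1
    (continuousOn_of_forall_continuousAt fun x _ =>
      (hasDerivAt_segment_primitive a b T m (by positivity) x).continuousAt)
    (fun x hx => ((hasDerivAt_segment_primitive a b T m (by positivity) x).congr_deriv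
      (satN_eq_of_mem_Icc hb hT (hsub (Ioo_subset_Icc_self hx))).symm))
    (intervalIntegrable_satN_of_subset_Icc hb hT (by rwa [uIcc_of_le hχ.1]))]
  simp

theorem intervalIntegrable_satN_zero_brk (hb : 1 < b) (hT : 0 < T) (m : ℕ) :
    IntervalIntegrable (satN a b T) MeasureTheory.volume 0 (brk b T m) := by
  induction m with
  | zero => rw [brk_zero]
  | succ k ih =>
    refine ih.trans (intervalIntegrable_satN_of_subset_Icc hb hT (m := k) ?_)
    rw [uIcc_of_le (brk_lt_succ hb hT k).le]

theorem satG_eq_add_integral (hb : 1 < b) (hT : 0 < T) {m : ℕ} {χ : ℝ}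
    (hχ : χ ∈ Icc (brk b T m) (brk b T (m + 1))) :
    satG a b T χ = satG a b T (brk b T m) +
      (-1) ^ m * a * (b ^ m * T) * sin ((χ - brk b T m) / (b ^ m * T)) := by
  have hsub : uIcc (brk b T m) χ ⊆ Icc (brk b T m) (brk b T (m + 1)) := by
    rw [uIcc_of_le hχ.1]
    exact Icc_subset_Icc_right hχ.2
  rw [satG, satG, ← intervalIntegral.integral_add_adjacent_intervals
    (intervalIntegrable_satN_zero_brk hb hT m) (intervalIntegrable_satN_of_subset_Icc hb hT hsub),
    integral_satN_segment hb hT hχ]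

theorem satG_brk (hb : 1 < b) (hT : 0 < T) (m : ℕ) : satG a b T (brk b T m) = 0 := by
  induction m with
  | zero => simp [satG, brk_zero]
  | succ k ih =>
    rw [satG_eq_add_integral hb hT ⟨(brk_lt_succ hb hT k).le, le_rfl⟩, ih,
      brk_succ_sub_div hb hT, sin_pi]
    ring

theorem satG_eq_of_mem_Icc (hb : 1 < b) (hT : 0 < T) {m : ℕ} {χ : ℝ}
    (hχ : χ ∈ Icc (brk b T m) (brk b T (m + 1))) :
    satG a b T χ = (-1) ^ m * (a * b ^ m * T) * sin ((χ - brk b T m) / (b ^ m * T)) := by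
  rw [satG_eq_add_integral hb hT hχ, satG_brk hb hT]
  ring

theorem sin_segment_nonneg (hb : 1 < b) (hT : 0 < T) {m : ℕ} {χ : ℝ}
    (hχ : χ ∈ Icc (brk b T m) (brk b T (m + 1))) :
    0 ≤ sin ((χ - brk b T m) / (b ^ m * T)) := by
  have hbT : 0 < b ^ m * T := by positivity
  refine sin_nonneg_of_nonneg_of_le_pi (div_nonneg (by linarith [hχ.1]) hbT.le) ?_
  rw [← brk_succ_sub_div hb hT m]
  gcongr
  exact hχ.2

end Segment

/-- content of Lemma 3.5: for even `n ≥ 2` and `χ ∈ [0, s_n]`,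
`G_{a,b,T}(χ) ≤ a·T·b^{n−2}`. -/
theorem satG_upper_bound_even (a b T : ℝ) (ha : 0 < a) (hb : 1 < b) (hT : 0 < T)
    (n : ℕ) (hn : 2 ≤ n) (hne : Even n) (χ : ℝ)
    (hχ : χ ∈ Set.Icc (0 : ℝ) (brk b T n)) :
    satG a b T χ ≤ a * T * b ^ (n - 2) := by
  rw [← brk_zero b T] at hχ
  obtain ⟨m, hmn, hm⟩ := exists_lt_mem_Icc_succ (by omega) hχ
  rw [satG_eq_of_mem_Icc hb hT hm]
  have hsin := sin_segment_nonneg hb hT hm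
  rcases Nat.even_or_odd m with hm_even | hm_odd
  · have hmn2 : m ≤ n - 2 := by
      obtain ⟨k, rfl⟩ := hm_even
      obtain ⟨l, rfl⟩ := hne
      omega
    calc (-1) ^ m * (a * b ^ m * T) * sin ((χ - brk b T m) / (b ^ m * T))
        ≤ a * b ^ m * T := by
          rw [hm_even.neg_one_pow, one_mul]
          exact mul_le_of_le_one_right (by positivity) (sin_le_one _)
      _ ≤ a * T * b ^ (n - 2) := by
          rw [mul_right_comm]
          gcongr
          exact hb.le
  · rw [hm_odd.neg_one_pow, neg_one_mul, neg_mul]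
    have : 0 ≤ a * b ^ m * T * sin ((χ - brk b T m) / (b ^ m * T)) := by positivity
    have : 0 ≤ a * T * b ^ (n - 2) := by positivity
    linarith
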